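/- Let ⊢ be a mono-unary logic (language consisting of a single unary connective □ only). Then ⊢ has an algebraic semantics if and only if x ⊢ □x; moreover, when x ⊢ □x, the set τ = { x ≈ □x } yields a τ-algebraic semantics. -/

import Mathlib

/-- An algebraic signature: a type of operation symbols with arities. -/
structure Sig : Type 1 where
  Op : Type
  ar : Op → ℕ

/-- Formulas (terms) over a signature, with variables indexed by ℕ. -/
inductive Fm (L : Sig) : Type where
  | var : ℕ → Fm L
  | op : (f : L.Op) → (Fin (L.ar f) → Fm L) → Fm L

/-- An algebra for the signature `L`. -/
structure Alg (L : Sig) : Type 1 where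
  carrier : Type
  interp : (f : L.Op) → (Fin (L.ar f) → carrier) → carrier

/-- Evaluation of a formula in an algebra under a valuation of the variables. -/
def Fm.eval {L : Sig} (A : Alg L) (v : ℕ → A.carrier) : Fm L → A.carrier
  | .var n => v n
  | .op f as => A.interp f (fun i => (as i).eval A v)

/-- Substitution (endomorphism of the formula algebra). -/
def Fm.subst {L : Sig} (σ : ℕ → Fm L) : Fm L → Fm L
  | .var n => σ n
  | .op f as => .op f (fun i => (as i).subst σ)

/-- The set of variables occurring in a formula. -/
def Fm.vars {L : Sig} : Fm L → Set ℕ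
  | .var n => {n}
  | .op _ as => ⋃ i, (as i).vars

/-- Substitute the formula `ψ` for the variable `v` in `φ`. -/
def Fm.subst1 {L : Sig} (v : ℕ) (ψ : Fm L) (φ : Fm L) : Fm L :=
  φ.subst (fun n => if n = v then ψ else .var n)

/-- A logic: a substitution-invariant (finitary or not) consequence relation on formulas. -/
structure Logic (L : Sig) : Type where
  deriv : Set (Fm L) → Fm L → Prop
  axm : ∀ Γ φ, φ ∈ Γ → deriv Γ φ
  mono : ∀ Γ Δ φ, Γ ⊆ Δ → deriv Γ φ → deriv Δ φ
  cut : ∀ Γ Δ φ, deriv Γ φ → (∀ γ ∈ Γ, deriv Δ γ) → deriv Δ φ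
  substInv : ∀ (σ : ℕ → Fm L) Γ φ, deriv Γ φ → deriv (Fm.subst σ '' Γ) (φ.subst σ)

/-- A logical matrix: an algebra with a set of designated elements. -/
structure LMatrix (L : Sig) : Type 1 where
  alg : Alg L
  F : Set alg.carrier

/-- The consequence relation induced by a class of matrices. -/
def inducedBy {L : Sig} (M : Set (LMatrix L)) (Γ : Set (Fm L)) (φ : Fm L) : Prop :=
  ∀ m ∈ M, ∀ v : ℕ → m.alg.carrier,
    (∀ γ ∈ Γ, γ.eval m.alg v ∈ m.F) → φ.eval m.alg v ∈ m.F

/-- `M` is a matrix semantics for the logic `ℒ`. -/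
def IsMatrixSemantics {L : Sig} (ℒ : Logic L) (M : Set (LMatrix L)) : Prop :=
  ∀ Γ φ, ℒ.deriv Γ φ ↔ inducedBy M Γ φ

/-- Equational consequence relative to a class of algebras (equations as pairs of formulas). -/
def eqConseq {L : Sig} (K : Set (Alg L)) (Θ : Set (Fm L × Fm L)) (e : Fm L × Fm L) : Prop :=
  ∀ A ∈ K, ∀ v : ℕ → A.carrier,
    (∀ p ∈ Θ, p.1.eval A v = p.2.eval A v) → e.1.eval A v = e.2.eval A v

/-- `τ(φ)`: the result of substituting `φ` for the variable `x` (= variable 0) in each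
equation of `τ`. -/
def tauApp {L : Sig} (τ : Set (Fm L × Fm L)) (φ : Fm L) : Set (Fm L × Fm L) :=
  (fun e => (Fm.subst1 0 φ e.1, Fm.subst1 0 φ e.2)) '' τ

/-- `τ[Γ]`. -/
def tauAppSet {L : Sig} (τ : Set (Fm L × Fm L)) (Γ : Set (Fm L)) : Set (Fm L × Fm L) :=
  ⋃ γ ∈ Γ, tauApp τ γ

/-- `τ` is a set of equations in the single variable `x` (= variable 0). -/
def IsUnivalent {L : Sig} (τ : Set (Fm L × Fm L)) : Prop :=
  ∀ e ∈ τ, e.1.vars ⊆ ({0} : Set ℕ) ∧ e.2.vars ⊆ ({0} : Set ℕ)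

/-- `K` is a `τ`-algebraic semantics for `ℒ`: `Γ ⊢ φ` iff `τ[Γ] ⊨_K τ(φ)`. -/
def IsTauAlgSem {L : Sig} (ℒ : Logic L) (τ : Set (Fm L × Fm L)) (K : Set (Alg L)) : Prop :=
  IsUnivalent τ ∧ ∀ Γ φ, ℒ.deriv Γ φ ↔ ∀ e ∈ tauApp τ φ, eqConseq K (tauAppSet τ Γ) e

/-- `ℒ` has an algebraic semantics (admits an equational completeness theorem). -/
def HasAlgSem {L : Sig} (ℒ : Logic L) : Prop :=
  ∃ (τ : Set (Fm L × Fm L)) (K : Set (Alg L)), IsTauAlgSem ℒ τ K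

/-- `θ` is a congruence of the algebra `A`. -/
def IsCong {L : Sig} (A : Alg L) (θ : A.carrier → A.carrier → Prop) : Prop :=
  Equivalence θ ∧ ∀ (f : L.Op) (as bs : Fin (L.ar f) → A.carrier),
    (∀ i, θ (as i) (bs i)) → θ (A.interp f as) (A.interp f bs)

/-- The congruence of `A` generated by `X` (least congruence containing `X`). -/
def congGen {L : Sig} (A : Alg L) (X : Set (A.carrier × A.carrier))
    (a c : A.carrier) : Prop :=
  ∀ θ, IsCong A θ → (∀ p ∈ X, θ p.1 p.2) → θ a c

/-- `p` is a unary polynomial function of `A`: `p(a) = φ^A(a, c⃗)` for a formula `φ(x, y⃗)`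
and parameters `c⃗` from `A`. -/
def IsUnaryPoly {L : Sig} (A : Alg L) (p : A.carrier → A.carrier) : Prop :=
  ∃ (φ : Fm L) (c : ℕ → A.carrier),
    ∀ a, p a = φ.eval A (fun n => if n = 0 then a else c n)

/-- Compatibility of a relation with a set. -/
def Compatible {L : Sig} (A : Alg L) (θ : A.carrier → A.carrier → Prop)
    (F : Set A.carrier) : Prop :=
  ∀ a c, θ a c → a ∈ F → c ∈ F

/-- The Leibniz congruence `Ω^A F`: the largest congruence of `A` compatible with `F`
(realized as the union of all congruences compatible with `F`). -/
def leibniz {L : Sig} (A : Alg L) (F : Set A.carrier) (a c : A.carrier) : Prop :=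
  ∃ θ, IsCong A θ ∧ Compatible A θ F ∧ θ a c

/-- The formula algebra. -/
def FmAlg (L : Sig) : Alg L :=
  ⟨Fm L, fun f as => Fm.op f as⟩

/-- `ℒ` has no theorems. -/
def LacksTheorems {L : Sig} (ℒ : Logic L) : Prop :=
  ¬ ∃ φ, ℒ.deriv ∅ φ

/-- `ℒ` is assertional. -/
def Assertional {L : Sig} (ℒ : Logic L) : Prop :=
  ∃ (M : Set (LMatrix L)) (φ : Fm L), IsMatrixSemantics ℒ M ∧ φ.vars ⊆ ({0} : Set ℕ) ∧
    ∀ m ∈ M, ∃ c : m.alg.carrier,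
      (∀ a : m.alg.carrier, φ.eval m.alg (fun _ => a) = c) ∧ m.F = {c}

/-- `ℒ` is almost assertional. -/
def AlmostAssertional {L : Sig} (ℒ : Logic L) : Prop :=
  LacksTheorems ℒ ∧
  ∃ (M : Set (LMatrix L)) (φ : Fm L), IsMatrixSemantics ℒ M ∧ φ.vars ⊆ ({0} : Set ℕ) ∧
    ∀ m ∈ M, m.F.Nonempty → ∃ c : m.alg.carrier,
      (∀ a : m.alg.carrier, φ.eval m.alg (fun _ => a) = c) ∧ m.F = {c}

/-- Two formulas are logically equivalent in `ℒ`. -/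
def LogEquiv {L : Sig} (ℒ : Logic L) (ε δ : Fm L) : Prop :=
  ∀ (φ : Fm L) (v : ℕ),
    ℒ.deriv {Fm.subst1 v ε φ} (Fm.subst1 v δ φ) ∧
    ℒ.deriv {Fm.subst1 v δ φ} (Fm.subst1 v ε φ)

/-! If `τ` is univalent, each of its equations has the form `□ᵐx ≈ □ⁿx`, and substituting `□x`
for `x` turns it into `□ᵐ⁺¹x ≈ □ⁿ⁺¹x`, which follows from it; so `τ(x) ⊨ τ(□x)`, i.e. `x ⊢ □x`.

Conversely, if `x ⊢ □x`, let `K` consist of the algebras in which the fixed points of `□` are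
closed under the rules of `⊢`; soundness is then built in. For completeness, collapse the theory
`T` of `Γ` to a single point of the formula algebra. This is a congruence because `T` is closed
under `□`, and since `□φ ≠ φ`, the class of `φ` is a fixed point of `□` exactly when `φ ∈ T`. -/

namespace Fm

variable {L : Sig}

theorem subst_var : ∀ φ : Fm L, φ.subst var = φ
  | .var _ => rfl
  | .op f as => congrArg (op f) (funext fun i => subst_var (as i))

theorem subst1_self (n : ℕ) (φ : Fm L) : subst1 n (var n) φ = φ := by
  conv_rhs => rw [← subst_var φ]
  unfold subst1
  congr with m
  split_ifs with h <;> simp [h]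

theorem op_ne_of_apply_eq : ∀ (φ : Fm L) {f : L.Op} {as : Fin (L.ar f) → Fm L} {i : Fin (L.ar f)},
    as i = φ → op f as ≠ φ
  | .var _, _, _, _, _, h => nomatch h
  | .op _ bs, _, _, i, hi, h => by
    cases h
    exact op_ne_of_apply_eq (bs i) rfl hi.symm

end Fm

section Canonical

variable {L : Sig}

theorem tauAppSet_singleton_var_zero (τ : Set (Fm L × Fm L)) :
    tauAppSet τ {Fm.var 0} = τ := by
  simp [tauAppSet, tauApp, Fm.subst1_self]

/-- `A, v ⊨ τ(φ)`. -/
def SatTau (A : Alg L) (v : ℕ → A.carrier) (τ : Set (Fm L × Fm L)) (φ : Fm L) : Prop :=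
  ∀ e ∈ tauApp τ φ, e.1.eval A v = e.2.eval A v

theorem forall_tauApp_eqConseq_iff {K : Set (Alg L)} {τ : Set (Fm L × Fm L)}
    {Γ : Set (Fm L)} {φ : Fm L} :
    (∀ e ∈ tauApp τ φ, eqConseq K (tauAppSet τ Γ) e) ↔
      ∀ A ∈ K, ∀ v, (∀ γ ∈ Γ, SatTau A v τ γ) → SatTau A v τ φ := by
  have hΓ {A : Alg L} {v : ℕ → A.carrier} :
      (∀ p ∈ tauAppSet τ Γ, p.1.eval A v = p.2.eval A v) ↔ ∀ γ ∈ Γ, SatTau A v τ γ := by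
    simp only [tauAppSet, Set.mem_iUnion₂]
    exact ⟨fun h γ hγ p hp => h p ⟨γ, hγ, hp⟩, fun h p ⟨γ, hγ, hp⟩ => h γ hγ p hp⟩
  simp only [eqConseq, hΓ, SatTau]
  exact ⟨fun h A hA v hv e he => h e he A hA v hv, fun h e he A hA v hv => h A hA v hv e he⟩

/-- The largest class of algebras in which `τ` is sound for `ℒ`. -/
def Logic.tauModels (ℒ : Logic L) (τ : Set (Fm L × Fm L)) : Set (Alg L) :=
  {A | ∀ Δ ψ, ℒ.deriv Δ ψ → ∀ v, (∀ δ ∈ Δ, SatTau A v τ δ) → SatTau A v τ ψ}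

theorem Logic.isTauAlgSem_tauModels {ℒ : Logic L} {τ : Set (Fm L × Fm L)}
    (hτ : IsUnivalent τ)
    (hcompl : ∀ Γ φ, (∀ A ∈ ℒ.tauModels τ, ∀ v, (∀ γ ∈ Γ, SatTau A v τ γ) → SatTau A v τ φ) →
      ℒ.deriv Γ φ) :
    IsTauAlgSem ℒ τ (ℒ.tauModels τ) :=
  ⟨hτ, fun Γ φ => forall_tauApp_eqConseq_iff.trans
    ⟨fun h => hcompl Γ φ h, fun h _ hA v hv => hA Γ φ h v hv⟩ |>.symm⟩

end Canonical

namespace Fm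

variable {L : Sig}

def congSetoid (θ : Fm L → Fm L → Prop) (hθ : IsCong (FmAlg L) θ) : Setoid (Fm L) :=
  ⟨θ, hθ.1⟩

abbrev quotAlg (θ : Fm L → Fm L → Prop) (hθ : IsCong (FmAlg L) θ) : Alg L where
  carrier := Quotient (congSetoid θ hθ)
  interp f as := Quotient.map (op f) (fun _ _ h => hθ.2 f _ _ h) (Quotient.finChoice as)

theorem eval_quotAlg {θ : Fm L → Fm L → Prop} (hθ : IsCong (FmAlg L) θ) (u : ℕ → Fm L) :
    ∀ φ : Fm L, φ.eval (quotAlg θ hθ) (fun n => Quotient.mk _ (u n)) =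
      Quotient.mk (congSetoid θ hθ) (φ.subst u)
  | .var _ => rfl
  | .op f as => by
    simp only [eval, eval_quotAlg hθ u]
    exact congrArg (Quotient.map (op f) fun _ _ h => hθ.2 f _ _ h) (Quotient.finChoice_eq _)

def collapse (T : Set (Fm L)) (φ ψ : Fm L) : Prop :=
  φ = ψ ∨ φ ∈ T ∧ ψ ∈ T

theorem isCong_collapse {T : Set (Fm L)} (hT : ∀ f as i, as i ∈ T → op f as ∈ T) :
    IsCong (FmAlg L) (collapse T) := by
  refine ⟨⟨fun _ => .inl rfl, ?symm, ?trans⟩, fun f as bs h => ?_⟩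
  case symm =>
    rintro _ _ (rfl | ⟨h₁, h₂⟩)
    exacts [.inl rfl, .inr ⟨h₂, h₁⟩]
  case trans =>
    rintro _ _ _ (rfl | ⟨h₁, h₂⟩) h
    · exact h
    · rcases h with rfl | ⟨-, h₃⟩
      exacts [.inr ⟨h₁, h₂⟩, .inr ⟨h₁, h₃⟩]
  by_cases heq : as = bs
  · exact .inl (congrArg (op f) heq)
  · obtain ⟨i, hi⟩ := Function.ne_iff.1 heq
    obtain ⟨has, hbs⟩ := (h i).resolve_left hi
    exact .inr ⟨hT f as i has, hT f bs i hbs⟩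

theorem collapse_apply_op_iff {T : Set (Fm L)} (hT : ∀ f as i, as i ∈ T → op f as ∈ T)
    {f : L.Op} {as : Fin (L.ar f) → Fm L} {i : Fin (L.ar f)} :
    collapse T (as i) (op f as) ↔ as i ∈ T :=
  ⟨fun h => (h.resolve_left (op_ne_of_apply_eq _ rfl).symm).1,
    fun h => .inr ⟨h, hT f as i h⟩⟩

end Fm

section MonoUnary

variable {L : Sig} {b : L.Op}

theorem ar_eq_one (hb : ∀ f : L.Op, f = b) (h1 : L.ar b = 1) (f : L.Op) : L.ar f = 1 :=
  hb f ▸ h1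

theorem Fm.op_eq_box (hb : ∀ f : L.Op, f = b) (h1 : L.ar b = 1) {f : L.Op}
    (as : Fin (L.ar f) → Fm L) (i : Fin (L.ar f)) : op f as = op b fun _ => as i := by
  have : Subsingleton (Fin (L.ar f)) := ar_eq_one hb h1 f ▸ inferInstance
  obtain rfl := hb f
  exact congrArg (op f) (funext fun j => congrArg as (Subsingleton.elim j i))

theorem Fm.subst1_zero_box (hb : ∀ f : L.Op, f = b) (h1 : L.ar b = 1) :
    ∀ ψ : Fm L, ψ.vars ⊆ {0} → subst1 0 (op b fun _ => var 0) ψ = op b fun _ => ψ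
  | .var n, h => by
    obtain rfl : n = 0 := h rfl
    rfl
  | .op f as, h => by
    have i : Fin (L.ar f) := Fin.cast (ar_eq_one hb h1 f).symm 0
    calc subst1 0 (op b fun _ => var 0) (op f as)
        = op f fun j => subst1 0 (op b fun _ => var 0) (as j) := rfl
      _ = op f fun j => op b fun _ => as j := by
        congr with j
        exact subst1_zero_box hb h1 (as j) ((Set.subset_iUnion (fun j => (as j).vars) j).trans h)
      _ = op b fun _ => op b fun _ => as i := op_eq_box hb h1 _ i
      _ = op b fun _ => op f as := by rw [← op_eq_box hb h1 as i]

theorem HasAlgSem.deriv_var_box (hb : ∀ f : L.Op, f = b) (h1 : L.ar b = 1) {ℒ : Logic L}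
    (h : HasAlgSem ℒ) : ℒ.deriv {Fm.var 0} (Fm.op b fun _ => Fm.var 0) := by
  obtain ⟨τ, K, hτ, hsem⟩ := h
  refine (hsem _ _).2 ?_
  rintro _ ⟨e, he, rfl⟩ A - v hv
  have heq : e.1.eval A v = e.2.eval A v := hv e (by rwa [tauAppSet_singleton_var_zero])
  simp only [Fm.subst1_zero_box hb h1 _ (hτ e he).1, Fm.subst1_zero_box hb h1 _ (hτ e he).2]
  exact congrArg (fun a => A.interp b fun _ => a) heq

def tauBox (b : L.Op) : Set (Fm L × Fm L) :=
  {(Fm.var 0, Fm.op b fun _ => Fm.var 0)}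

theorem isUnivalent_tauBox : IsUnivalent (tauBox b) := by
  rintro _ rfl
  exact ⟨subset_rfl, Set.iUnion_subset fun _ => subset_rfl⟩

theorem satTau_tauBox_iff {A : Alg L} {v : ℕ → A.carrier} {φ : Fm L} :
    SatTau A v (tauBox b) φ ↔ φ.eval A v = (Fm.op b fun _ => φ).eval A v := by
  simp [SatTau, tauApp, tauBox, Fm.subst1, Fm.subst]

theorem Logic.op_mem_theory (hb : ∀ f : L.Op, f = b) (h1 : L.ar b = 1) {ℒ : Logic L}
    (hx : ℒ.deriv {Fm.var 0} (Fm.op b fun _ => Fm.var 0)) (Γ : Set (Fm L)) (f : L.Op)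
    (as : Fin (L.ar f) → Fm L) (i : Fin (L.ar f)) (hi : as i ∈ {ψ | ℒ.deriv Γ ψ}) :
    Fm.op f as ∈ {ψ | ℒ.deriv Γ ψ} := by
  rw [Fm.op_eq_box hb h1 as i]
  have hbox := ℒ.substInv (fun _ => as i) _ _ hx
  rw [Set.image_singleton] at hbox
  exact ℒ.cut _ Γ _ hbox fun _ hγ => hγ ▸ hi

theorem satTau_tauBox_quotAlg_collapse_iff (hb : ∀ f : L.Op, f = b) (h1 : L.ar b = 1)
    {T : Set (Fm L)} (hT : ∀ f as i, as i ∈ T → Fm.op f as ∈ T) (u : ℕ → Fm L) (φ : Fm L) :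
    SatTau (Fm.quotAlg (Fm.collapse T) (Fm.isCong_collapse hT)) (fun n => Quotient.mk _ (u n))
      (tauBox b) φ ↔ φ.subst u ∈ T := by
  rw [satTau_tauBox_iff, Fm.eval_quotAlg, Fm.eval_quotAlg, Quotient.eq]
  exact Fm.collapse_apply_op_iff hT (as := fun _ => φ.subst u)
    (i := Fin.cast (ar_eq_one hb h1 b).symm 0)

theorem Logic.quotAlg_collapse_mem_tauModels (hb : ∀ f : L.Op, f = b) (h1 : L.ar b = 1)
    {ℒ : Logic L} {Γ : Set (Fm L)}
    (hT : ∀ f as i, as i ∈ {ψ | ℒ.deriv Γ ψ} → Fm.op f as ∈ {ψ | ℒ.deriv Γ ψ}) :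
    Fm.quotAlg (Fm.collapse _) (Fm.isCong_collapse hT) ∈ ℒ.tauModels (tauBox b) := by
  intro Δ ψ hΔψ v hv
  obtain ⟨u, rfl⟩ : ∃ u : ℕ → Fm L, (fun n => Quotient.mk _ (u n)) = v :=
    ⟨fun n => (v n).out, funext fun n => Quotient.out_eq _⟩
  refine (satTau_tauBox_quotAlg_collapse_iff hb h1 hT u ψ).2 ?_
  refine ℒ.cut _ Γ _ (ℒ.substInv u Δ ψ hΔψ) ?_
  rintro _ ⟨δ, hδ, rfl⟩
  exact (satTau_tauBox_quotAlg_collapse_iff hb h1 hT u δ).1 (hv δ hδ)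

theorem Logic.isTauAlgSem_tauBox (hb : ∀ f : L.Op, f = b) (h1 : L.ar b = 1) {ℒ : Logic L}
    (hx : ℒ.deriv {Fm.var 0} (Fm.op b fun _ => Fm.var 0)) :
    IsTauAlgSem ℒ (tauBox b) (ℒ.tauModels (tauBox b)) := by
  refine isTauAlgSem_tauModels isUnivalent_tauBox fun Γ φ hφ => ?_
  have hT := ℒ.op_mem_theory hb h1 hx Γ
  have hsat := satTau_tauBox_quotAlg_collapse_iff hb h1 hT Fm.var
  simp only [Fm.subst_var] at hsat
  exact (hsat φ).1 <| hφ _ (quotAlg_collapse_mem_tauModels hb h1 hT) _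
    fun γ hγ => (hsat γ).2 (ℒ.axm Γ γ hγ)

end MonoUnary

/-- A mono-unary logic (language consisting of a single unary connective `□` only) has an
algebraic semantics iff `x ⊢ □x`; moreover, when `x ⊢ □x`, the set `τ = { x ≈ □x }`
yields a `τ`-algebraic semantics. -/
theorem mono_unary_alg_sem_iff {L : Sig} (b : L.Op) (hb : ∀ f : L.Op, f = b)
    (h1 : L.ar b = 1) (ℒ : Logic L) :
    (HasAlgSem ℒ ↔ ℒ.deriv {Fm.var 0} (Fm.op b (fun _ => Fm.var 0))) ∧
    (ℒ.deriv {Fm.var 0} (Fm.op b (fun _ => Fm.var 0)) →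
      ∃ K : Set (Alg L),
        IsTauAlgSem ℒ {(Fm.var 0, Fm.op b (fun _ => Fm.var 0))} K) :=
  ⟨⟨HasAlgSem.deriv_var_box hb h1, fun hx => ⟨_, _, ℒ.isTauAlgSem_tauBox hb h1 hx⟩⟩,
    fun hx => ⟨_, ℒ.isTauAlgSem_tauBox hb h1 hx⟩⟩
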